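/- Let Γ, δ ∈ ℂ with Γ ≠ 0 and Γ·conj(δ) ≠ δ·conj(Γ), set α = conj(Γ)/(Γ·conj(δ) − δ·conj(Γ)) and β = conj(δ)/(Γ·conj(δ) − δ·conj(Γ)), and let ω₊ ∈ ℂ be nonzero. Then it is impossible that both Re(β ω₊/(2Γ)) > 0 and Re(δ/(α ω₊)) < 0 hold. Consequently the function φ₀₀(x,y) = exp(−(β ω₊/(2Γ)) x² + (δ/(2α ω₊)) y²) is never square-integrable on ℝ². -/

import Mathlib

open MeasureTheory

/-- Partial derivative in the `x`-direction of a function on `ℝ²`. -/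
noncomputable def pdx (f : ℝ × ℝ → ℂ) : ℝ × ℝ → ℂ := fun p => fderiv ℝ f p (1, 0)

/-- Partial derivative in the `y`-direction of a function on `ℝ²`. -/
noncomputable def pdy (f : ℝ × ℝ → ℂ) : ℝ × ℝ → ℂ := fun p => fderiv ℝ f p (0, 1)

/-- `α = conj(Γ)/(Γ conj(δ) − δ conj(Γ))`. -/
noncomputable def alphaDHO (Γ δ : ℂ) : ℂ :=
  (starRingEnd ℂ) Γ / (Γ * (starRingEnd ℂ) δ - δ * (starRingEnd ℂ) Γ)

/-- `β = conj(δ)/(Γ conj(δ) − δ conj(Γ))`. -/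
noncomputable def betaDHO (Γ δ : ℂ) : ℂ :=
  (starRingEnd ℂ) δ / (Γ * (starRingEnd ℂ) δ - δ * (starRingEnd ℂ) Γ)

/-- `a f = √(ω/2)·[(βx + i(δ/ω)y) f + (Γ/ω) ∂ₓ f − iα ∂_y f]`, with the principal branch
of the complex square root (`cpow`).  Taking the parameters `(Γ, δ, ω₊)` gives `a₊`; taking
the conjugated parameters `(conj Γ, conj δ, ω₋)` gives `a₋`. -/
noncomputable def aDHO (Γ δ ω : ℂ) (f : ℝ × ℝ → ℂ) : ℝ × ℝ → ℂ := fun p =>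
  (ω / 2) ^ ((1 : ℂ) / 2) *
    ((betaDHO Γ δ * (p.1 : ℂ) + Complex.I * (δ / ω) * (p.2 : ℂ)) * f p +
      (Γ / ω) * pdx f p - Complex.I * alphaDHO Γ δ * pdy f p)


/-- `φ₀₀(x,y) = exp(−(β ω/(2Γ)) x² + (δ/(2α ω)) y²)`. -/
noncomputable def phi00DHO (Γ δ ω : ℂ) : ℝ × ℝ → ℂ := fun p =>
  Complex.exp (-(betaDHO Γ δ * ω / (2 * Γ)) * (p.1 : ℂ) ^ 2 +
    (δ / (2 * alphaDHO Γ δ * ω)) * (p.2 : ℂ) ^ 2)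

/-!
`D = Γ conj δ - δ conj Γ` is purely imaginary, `D = 2 i Im(Γ conj δ)`, so `D² = -|D|²` and
`conj (δ / (α ω)) · |ω|² = 8 Im(Γ conj δ)² · β ω / (2Γ)`: the real parts of `β ω / (2Γ)` and
`δ / (α ω)` always have the same sign. On the other hand `|φ₀₀|²` is a product of a Gaussian in
`x` and one in `y`, and integrability on `ℝ²` forces both slices to be integrable, i.e. both
Gaussians to decay, which asks for opposite signs.
-/

section ProductIntegrability

variable {α β 𝕜 : Type*} [MeasurableSpace α] [MeasurableSpace β] [NormedField 𝕜]
  {μ : Measure α} {ν : Measure β} [SFinite μ] [SFinite ν] {f : α → 𝕜} {g : β → 𝕜}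

theorem MeasureTheory.Integrable.left_of_prod_mul [NeZero ν] (hg : ∀ y, g y ≠ 0)
    (h : Integrable (fun p : α × β => f p.1 * g p.2) (μ.prod ν)) : Integrable f μ := by
  obtain ⟨y, hy⟩ := h.prod_left_ae.exists
  simpa [mul_inv_cancel_right₀ (hg y)] using hy.mul_const (g y)⁻¹

theorem MeasureTheory.Integrable.right_of_prod_mul [NeZero μ] (hf : ∀ x, f x ≠ 0)
    (h : Integrable (fun p : α × β => f p.1 * g p.2) (μ.prod ν)) : Integrable g ν := by
  obtain ⟨x, hx⟩ := h.prod_right_ae.exists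
  simpa [inv_mul_cancel_left₀ (hf x)] using hx.const_mul (f x)⁻¹

end ProductIntegrability

theorem re_pos_and_re_neg_of_memLp_exp_quadratic {c d : ℂ}
    (h : MemLp (fun p : ℝ × ℝ => Complex.exp (-c * (p.1 : ℂ) ^ 2 + d * (p.2 : ℂ) ^ 2)) 2) :
    0 < c.re ∧ d.re < 0 := by
  have hnorm_sq : ∀ p : ℝ × ℝ, ‖Complex.exp (-c * (p.1 : ℂ) ^ 2 + d * (p.2 : ℂ) ^ 2)‖ ^ 2 =
      Real.exp (-(2 * c.re) * p.1 ^ 2) * Real.exp (-(-2 * d.re) * p.2 ^ 2) := by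
    intro p
    rw [Complex.norm_exp, ← Real.exp_nat_mul, ← Real.exp_add]
    simp only [← Complex.ofReal_pow, Complex.add_re, neg_mul, Complex.neg_re,
      Complex.re_mul_ofReal]
    ring_nf
  have hint : Integrable (fun p : ℝ × ℝ => Real.exp (-(2 * c.re) * p.1 ^ 2) *
      Real.exp (-(-2 * d.re) * p.2 ^ 2)) (volume.prod volume) := by
    rw [← Measure.volume_eq_prod]
    simpa only [hnorm_sq] using (memLp_two_iff_integrable_sq_norm h.aestronglyMeasurable).mp h
  set φ : ℝ → ℝ := fun x => Real.exp (-(2 * c.re) * x ^ 2)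
  set ψ : ℝ → ℝ := fun y => Real.exp (-(-2 * d.re) * y ^ 2)
  have hc := hint.left_of_prod_mul (f := φ) (g := ψ) fun _ => by positivity
  have hd := hint.right_of_prod_mul (f := φ) (g := ψ) fun _ => by positivity
  rw [integrable_exp_neg_mul_sq_iff] at hc hd
  constructor <;> linarith

open ComplexConjugate

theorem mul_conj_sub_mul_conj (Γ δ : ℂ) :
    Γ * conj δ - δ * conj Γ = (2 * (Γ * conj δ).im : ℝ) * Complex.I := by
  rw [← Complex.sub_conj]
  simp [mul_comm]

theorem re_div_alphaDHO_mul_normSq (Γ δ ω : ℂ) :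
    (δ / (alphaDHO Γ δ * ω)).re * Complex.normSq ω =
      8 * (Γ * conj δ).im ^ 2 * (betaDHO Γ δ * ω / (2 * Γ)).re := by
  have hD := mul_conj_sub_mul_conj Γ δ
  set s := (Γ * conj δ).im
  by_cases hs : s = 0
  · simp [alphaDHO, betaDHO, hD, hs]
  have hΓ : Γ ≠ 0 := by rintro rfl; simp [s] at hs
  rcases eq_or_ne ω 0 with rfl | hω
  · simp
  have hconj : conj (δ / (alphaDHO Γ δ * ω)) * (Complex.normSq ω : ℂ) =
      (8 * s ^ 2 : ℝ) * (betaDHO Γ δ * ω / (2 * Γ)) := by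
    have hs' : (s : ℂ) ≠ 0 := by exact_mod_cast hs
    have hω' : conj ω ≠ 0 := by simpa
    rw [Complex.normSq_eq_conj_mul_self]
    simp only [alphaDHO, betaDHO, hD, map_div₀, map_mul, Complex.conj_conj, Complex.conj_I,
      Complex.conj_ofReal]
    field_simp
    push_cast
    linear_combination (-8 * conj δ * (s : ℂ) ^ 2) * Complex.I_mul_I
  have hre := congrArg Complex.re hconj
  rwa [Complex.re_mul_ofReal, Complex.re_ofReal_mul, Complex.conj_re] at hre

theorem not_re_pos_and_re_div_alphaDHO_neg (Γ δ ω : ℂ) (hΓδ : Γ * conj δ ≠ δ * conj Γ) :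
    ¬(0 < (betaDHO Γ δ * ω / (2 * Γ)).re ∧ (δ / (alphaDHO Γ δ * ω)).re < 0) := by
  rintro ⟨hpos, hneg⟩
  have him : (Γ * conj δ).im ≠ 0 := by
    intro h
    rw [← sub_ne_zero, mul_conj_sub_mul_conj, h] at hΓδ
    simp at hΓδ
  have hlhs : (δ / (alphaDHO Γ δ * ω)).re * Complex.normSq ω ≤ 0 :=
    mul_nonpos_of_nonpos_of_nonneg hneg.le (Complex.normSq_nonneg ω)
  have hrhs : 0 < 8 * (Γ * conj δ).im ^ 2 * (betaDHO Γ δ * ω / (2 * Γ)).re := by positivity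
  linarith [re_div_alphaDHO_mul_normSq Γ δ ω]

theorem statement19_general (Γ δ ω : ℂ)
    (hΓδ : Γ * (starRingEnd ℂ) δ ≠ δ * (starRingEnd ℂ) Γ) :
    ¬(0 < (betaDHO Γ δ * ω / (2 * Γ)).re ∧ (δ / (alphaDHO Γ δ * ω)).re < 0) ∧
    ¬ MemLp (phi00DHO Γ δ ω) 2 (volume : Measure (ℝ × ℝ)) := by
  have hsign := not_re_pos_and_re_div_alphaDHO_neg Γ δ ω hΓδ
  refine ⟨hsign, fun hmem => hsign ?_⟩
  obtain ⟨hpos, hneg⟩ := re_pos_and_re_neg_of_memLp_exp_quadratic hmem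
  refine ⟨hpos, ?_⟩
  have : δ / (2 * alphaDHO Γ δ * ω) = δ / (alphaDHO Γ δ * ω) / 2 := by ring
  rw [this, Complex.div_ofNat_re] at hneg
  linarith

theorem statement19 (Γ δ ω : ℂ) (hΓ : Γ ≠ 0)
    (hΓδ : Γ * (starRingEnd ℂ) δ ≠ δ * (starRingEnd ℂ) Γ) (hω : ω ≠ 0) :
    ¬(0 < (betaDHO Γ δ * ω / (2 * Γ)).re ∧ (δ / (alphaDHO Γ δ * ω)).re < 0) ∧
    ¬ MemLp (phi00DHO Γ δ ω) 2 (volume : Measure (ℝ × ℝ)) :=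
  statement19_general Γ δ ω hΓδ
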